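/- arXiv:1611.09260 — 3 statements merged into one kernel-verified Lean document; each statement's English description precedes it below -/
import Mathlib

section
/- The boundary of the conic interval [l,u]_K equals (bd(l + K) ∩ (u − K)) ∪ ((l + K) ∩ bd(u − K)), where K is a proper convex cone and l <_K u. -/
theorem IsClosed.frontier_inter {X : Type*} [TopologicalSpace X] {s t : Set X}
    (hs : IsClosed s) (ht : IsClosed t) :
    frontier (s ∩ t) = frontier s ∩ t ∪ s ∩ frontier t := by
  rw [(hs.inter ht).frontier_eq, hs.frontier_eq, ht.frontier_eq, interior_inter]
  ext x
  simp only [Set.mem_sdiff, Set.mem_inter_iff, Set.mem_union]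
  tauto

theorem frontier_conic_interval_general (n : ℕ)
    (K : Set (EuclideanSpace ℝ (Fin n)))
    (hKclosed : IsClosed K)
    (l u : EuclideanSpace ℝ (Fin n)) :
    frontier ({x | x - l ∈ K} ∩ {x | u - x ∈ K})
      = (frontier {x | x - l ∈ K} ∩ {x | u - x ∈ K})
        ∪ ({x | x - l ∈ K} ∩ frontier {x | u - x ∈ K}) :=
  IsClosed.frontier_inter (hKclosed.preimage (continuous_sub_right l))
    (hKclosed.preimage (continuous_sub_left u))

/-- The boundary of the conic interval `[l,u]_K` equals
`(bd(l+K) ∩ (u−K)) ∪ ((l+K) ∩ bd(u−K))`, for `K` a proper convex cone and `l <_K u`. -/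
theorem frontier_conic_interval (n : ℕ)
    (K : Set (EuclideanSpace ℝ (Fin n)))
    (hKclosed : IsClosed K) (hKconv : Convex ℝ K)
    (hKcone : ∀ c : ℝ, 0 ≤ c → ∀ x ∈ K, c • x ∈ K)
    (hKpointed : K ∩ (-K) = {0})
    (hKint : (interior K).Nonempty)
    (l u : EuclideanSpace ℝ (Fin n)) (hlu : u - l ∈ K) (hne : l ≠ u) :
    frontier ({x | x - l ∈ K} ∩ {x | u - x ∈ K})
      = (frontier {x | x - l ∈ K} ∩ {x | u - x ∈ K})
        ∪ ({x | x - l ∈ K} ∩ frontier {x | u - x ∈ K}) :=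
  frontier_conic_interval_general n K hKclosed l u
end

section
/- Let K ⊆ ℝⁿ be a proper convex cone, l <_K u, and c ∈ ℝⁿ. Then max{⟨c,x⟩ : x ∈ [l,u]_K} is attained at a point of {l, u} ∪ (bd(l + K) ∩ bd(u − K)). -/
/-!
Since `K` is a closed pointed cone, `‖v + w‖ ≥ δ ‖v‖` for some `δ > 0` and all `v, w ∈ K`; applied
to `v = y - l`, `w = u - y` this bounds `[l,u]_K`, so it is compact and `⟨c, ·⟩` has a maximizer
`x` there. If `x` lies in the interior of `u - K`, the segment from `l` through `x` can be prolonged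
a little beyond `x` inside `[l,u]_K`, which forces `⟨c, x - l⟩ ≤ 0`, so `l` is a maximizer too.
Symmetrically `u` is a maximizer if `x` lies in the interior of `l + K`; otherwise `x` lies on
both boundaries.
-/

open Filter Metric Set Topology

def coneInterval {E : Type*} [Sub E] (K : Set E) (l u : E) : Set E :=
  {y | y - l ∈ K} ∩ {y | u - y ∈ K}

theorem map_le_of_isMaxOn_of_eventually_mem {E F : Type*} [AddCommGroup E] [Module ℝ E]
    [FunLike F E ℝ] [LinearMapClass F ℝ E ℝ] {f : F} {S : Set E} {x p : E}
    (hmax : IsMaxOn f S x) (hray : ∀ᶠ s in 𝓝[>] (0 : ℝ), x + s • (x - p) ∈ S) : f x ≤ f p := by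
  obtain ⟨s, hsS, hs⟩ := (hray.and self_mem_nhdsWithin).exists
  have hle : f (x + s • (x - p)) ≤ f x := hmax hsS
  rw [map_add, map_smul, map_sub, smul_eq_mul] at hle
  nlinarith

section TopologicalVectorSpace

variable {E F : Type*} [AddCommGroup E] [Module ℝ E] [TopologicalSpace E]
  [IsTopologicalAddGroup E] [ContinuousSMul ℝ E] [FunLike F E ℝ] [LinearMapClass F ℝ E ℝ]
  {K : Set E} {l u x : E}

theorem eventually_add_smul_mem_of_mem_interior {T : Set E} (hx : x ∈ interior T) (v : E) :
    ∀ᶠ s in 𝓝 (0 : ℝ), x + s • v ∈ T := by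
  have hcont : Tendsto (fun s : ℝ => x + s • v) (𝓝 0) (𝓝 x) := by
    simpa using tendsto_const_nhds.add (tendsto_id.smul_const v : Tendsto _ (𝓝 (0 : ℝ)) _)
  exact hcont.eventually (mem_interior_iff_mem_nhds.1 hx)

variable (hK : ∀ r : ℝ, 0 ≤ r → ∀ x ∈ K, r • x ∈ K) {f : F}
include hK

theorem isMaxOn_left_of_mem_interior (hx : x ∈ coneInterval K l u)
    (hmax : IsMaxOn f (coneInterval K l u) x) (hint : x ∈ interior {y | u - y ∈ K}) :
    IsMaxOn f (coneInterval K l u) l := by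
  have hray : ∀ᶠ s in 𝓝[>] (0 : ℝ), x + s • (x - l) ∈ coneInterval K l u := by
    filter_upwards [self_mem_nhdsWithin,
      nhdsWithin_le_nhds (eventually_add_smul_mem_of_mem_interior hint (x - l))] with s hs hsu
    have hshift : x + s • (x - l) - l = (1 + s) • (x - l) := by module
    refine ⟨?_, hsu⟩
    change x + s • (x - l) - l ∈ K
    rw [hshift]
    exact hK _ (by linarith [mem_Ioi.1 hs]) _ hx.1
  exact fun y hy => (hmax hy).trans (map_le_of_isMaxOn_of_eventually_mem hmax hray)

theorem isMaxOn_right_of_mem_interior (hx : x ∈ coneInterval K l u)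
    (hmax : IsMaxOn f (coneInterval K l u) x) (hint : x ∈ interior {y | y - l ∈ K}) :
    IsMaxOn f (coneInterval K l u) u := by
  have hray : ∀ᶠ s in 𝓝[>] (0 : ℝ), x + s • (x - u) ∈ coneInterval K l u := by
    filter_upwards [self_mem_nhdsWithin,
      nhdsWithin_le_nhds (eventually_add_smul_mem_of_mem_interior hint (x - u))] with s hs hsl
    have hshift : u - (x + s • (x - u)) = (1 + s) • (u - x) := by module
    refine ⟨hsl, ?_⟩
    change u - (x + s • (x - u)) ∈ K
    rw [hshift]
    exact hK _ (by linarith [mem_Ioi.1 hs]) _ hx.2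
  exact fun y hy => (hmax hy).trans (map_le_of_isMaxOn_of_eventually_mem hmax hray)

end TopologicalVectorSpace

section Normed

variable {E : Type*} [NormedAddCommGroup E] [NormedSpace ℝ E] [ProperSpace E] {K : Set E}
  (hKc : IsClosed K) (hK : ∀ r : ℝ, 0 ≤ r → ∀ x ∈ K, r • x ∈ K) (hpt : K ∩ -K ⊆ {0})
include hKc hK hpt

theorem exists_pos_mul_norm_le_norm_add_of_pointed :
    ∃ δ > 0, ∀ v ∈ K, ∀ w ∈ K, δ * ‖v‖ ≤ ‖v + w‖ := by
  have hpos : ∀ v ∈ K ∩ sphere 0 1, 0 < infDist (-v) K := by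
    rintro v ⟨hvK, hv⟩
    refine (hKc.notMem_iff_infDist_pos ⟨v, hvK⟩).1 fun hneg => ?_
    have hv0 : v = 0 := hpt ⟨hvK, mem_neg.2 hneg⟩
    simp [hv0] at hv
  obtain ⟨δ, hδ, hδle⟩ := ((isCompact_sphere 0 1).inter_left hKc).exists_forall_le'
    ((continuous_infDist_pt K).comp continuous_neg).continuousOn hpos
  refine ⟨δ, hδ, fun v hv w hw => ?_⟩
  rcases eq_or_ne v 0 with rfl | hv0
  · simp
  have hnv : 0 < ‖v‖ := norm_pos_iff.2 hv0
  have hunit : ‖v‖⁻¹ • v ∈ K ∩ sphere 0 1 :=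
    ⟨hK _ (inv_nonneg.2 hnv.le) _ hv, by simp [norm_smul, hnv.ne']⟩
  calc δ * ‖v‖ ≤ infDist (-(‖v‖⁻¹ • v)) K * ‖v‖ := by gcongr; exact hδle _ hunit
    _ ≤ dist (-(‖v‖⁻¹ • v)) (‖v‖⁻¹ • w) * ‖v‖ := by
      gcongr; exact infDist_le_dist_of_mem (hK _ (inv_nonneg.2 hnv.le) _ hw)
    _ = ‖v + w‖ := by
      rw [dist_eq_norm, ← neg_add', ← smul_add, norm_neg, norm_smul, norm_inv, norm_norm]
      field_simp

theorem isCompact_coneInterval (l u : E) : IsCompact (coneInterval K l u) := by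
  obtain ⟨δ, hδ, hbound⟩ := exists_pos_mul_norm_le_norm_add_of_pointed hKc hK hpt
  have hclosed : IsClosed (coneInterval K l u) :=
    (hKc.preimage (continuous_sub_right l)).inter (hKc.preimage (continuous_sub_left u))
  refine isCompact_of_isClosed_isBounded hclosed
    ((isBounded_closedBall (x := l) (r := ‖u - l‖ / δ)).subset fun y hy => ?_)
  rw [mem_closedBall, dist_eq_norm, le_div_iff₀ hδ, mul_comm]
  simpa using hbound _ hy.1 _ hy.2

end Normed

theorem max_attained_on_extreme_set_general (n : ℕ)
    (K : Set (EuclideanSpace ℝ (Fin n)))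
    (hKclosed : IsClosed K)
    (hKcone : ∀ r : ℝ, 0 ≤ r → ∀ x ∈ K, r • x ∈ K)
    (hKpointed : K ∩ (-K) = {0})
    (l u : EuclideanSpace ℝ (Fin n)) (hlu : u - l ∈ K)
    (c : EuclideanSpace ℝ (Fin n)) :
    ∃ x : EuclideanSpace ℝ (Fin n),
      x ∈ ({l, u} : Set (EuclideanSpace ℝ (Fin n)))
          ∪ (frontier {y | y - l ∈ K} ∩ frontier {y | u - y ∈ K}) ∧
      x ∈ {y | y - l ∈ K} ∩ {y | u - y ∈ K} ∧
      ∀ y ∈ {y | y - l ∈ K} ∩ {y | u - y ∈ K}, (inner ℝ c y : ℝ) ≤ inner ℝ c x := by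
  have hK0 : (0 : EuclideanSpace ℝ (Fin n)) ∈ K := (hKpointed.ge (mem_singleton 0)).1
  have hl : l ∈ coneInterval K l u := ⟨by simpa using hK0, by simpa using hlu⟩
  have hu : u ∈ coneInterval K l u := ⟨by simpa using hlu, by simpa using hK0⟩
  obtain ⟨x, hx, hmax⟩ :=
    (isCompact_coneInterval hKclosed hKcone hKpointed.subset l u).exists_isMaxOn
      ⟨l, hl⟩ (innerSL ℝ c).continuous.continuousOn
  by_cases hxu : x ∈ interior {y | u - y ∈ K}
  · exact ⟨l, Or.inl (Or.inl rfl), hl, isMaxOn_left_of_mem_interior hKcone hx hmax hxu⟩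
  by_cases hxl : x ∈ interior {y | y - l ∈ K}
  · exact ⟨u, Or.inl (Or.inr rfl), hu, isMaxOn_right_of_mem_interior hKcone hx hmax hxl⟩
  exact ⟨x, Or.inr ⟨⟨subset_closure hx.1, hxl⟩, ⟨subset_closure hx.2, hxu⟩⟩, hx, hmax⟩

/-- For a proper convex cone `K`, `l <_K u` and `c ∈ ℝⁿ`, the maximum of `⟨c,·⟩` over
`[l,u]_K` is attained at a point of `{l, u} ∪ (bd(l+K) ∩ bd(u−K))`. -/
theorem max_attained_on_extreme_set (n : ℕ)
    (K : Set (EuclideanSpace ℝ (Fin n)))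
    (hKclosed : IsClosed K) (hKconv : Convex ℝ K)
    (hKcone : ∀ r : ℝ, 0 ≤ r → ∀ x ∈ K, r • x ∈ K)
    (hKpointed : K ∩ (-K) = {0})
    (hKint : (interior K).Nonempty)
    (l u : EuclideanSpace ℝ (Fin n)) (hlu : u - l ∈ K) (hne : l ≠ u)
    (c : EuclideanSpace ℝ (Fin n)) :
    ∃ x : EuclideanSpace ℝ (Fin n),
      x ∈ ({l, u} : Set (EuclideanSpace ℝ (Fin n)))
          ∪ (frontier {y | y - l ∈ K} ∩ frontier {y | u - y ∈ K}) ∧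
      x ∈ {y | y - l ∈ K} ∩ {y | u - y ∈ K} ∧
      ∀ y ∈ {y | y - l ∈ K} ∩ {y | u - y ∈ K}, (inner ℝ c y : ℝ) ≤ inner ℝ c x :=
  max_attained_on_extreme_set_general n K hKclosed hKcone hKpointed l u hlu c
end

section
/- Let w = (w₀, w̃) be in the interior of the Lorentz cone L_n (i.e., ‖w̃‖₂ < w₀). Set w̄ = w̃/w₀, w̄₀ = (w₀² − ‖w̃‖²)/(2w₀), Q = I − w̄ w̄ᵀ, γ² = w₀ w̄₀/2. Then the set E(w) = {x = (x₀, x̃) : ‖x̃‖² = x₀², ‖w̃ − x̃‖² = (w₀ − x₀)²} equals {x : x₀ = ⟨x̃, w̄⟩ + w̄₀ and ‖Q^{1/2}(x̃ − w̃/2)‖² = γ²}. -/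
/-!
Subtracting the two cone equations `‖x̃‖² = x₀²` and `‖w̃ - x̃‖² = (w₀ - x₀)²` cancels the quadratic
terms and leaves the hyperplane `x₀ = ⟨x̃, w̄⟩ + w̄₀`. On that hyperplane `⟨w̄, x̃ - w̃/2⟩ = x₀ - w₀/2`,
so the quadratic form `⟨v, Qv⟩ = ‖v‖² - ⟨w̄, v⟩²` at `v = x̃ - w̃/2` equals `‖x̃‖² - x₀² + γ²`,
and the remaining cone equation becomes the ellipsoid equation.
-/

open RealInnerProductSpace

section

variable {E : Type*} [NormedAddCommGroup E] [InnerProductSpace ℝ E]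

lemma inner_sub_inner_smul_self (a v : E) : ⟪v, v - ⟪a, v⟫ • a⟫ = ‖v‖ ^ 2 - ⟪a, v⟫ ^ 2 := by
  rw [inner_sub_right, real_inner_smul_right, real_inner_self_eq_norm_sq, real_inner_comm]
  ring

lemma norm_sub_sq_eq_sq_iff_of_norm_sq_eq {w0 x0 : ℝ} {w x : E} (hw0 : w0 ≠ 0)
    (hx : ‖x‖ ^ 2 = x0 ^ 2) :
    ‖w - x‖ ^ 2 = (w0 - x0) ^ 2 ↔ x0 = ⟪x, w0⁻¹ • w⟫ + (w0 ^ 2 - ‖w‖ ^ 2) / (2 * w0) := by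
  rw [norm_sub_sq_real, real_inner_smul_right, real_inner_comm, hx]
  constructor
  · intro h
    field_simp
    linear_combination h
  · intro h
    rw [h]
    field_simp
    ring

lemma inner_sub_half_smul_eq_of_mem_hyperplane {w0 x0 : ℝ} {w x : E} (hw0 : w0 ≠ 0)
    (hx0 : x0 = ⟪x, w0⁻¹ • w⟫ + (w0 ^ 2 - ‖w‖ ^ 2) / (2 * w0)) :
    ⟪w0⁻¹ • w, x - (1 / 2 : ℝ) • w⟫ = x0 - w0 / 2 := by
  rw [real_inner_smul_left, inner_sub_right, real_inner_smul_right, real_inner_self_eq_norm_sq,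
    hx0, real_inner_smul_right, real_inner_comm]
  field_simp
  ring

lemma quadratic_form_eq_of_mem_hyperplane {w0 x0 : ℝ} {w x : E} (hw0 : w0 ≠ 0)
    (hx0 : x0 = ⟪x, w0⁻¹ • w⟫ + (w0 ^ 2 - ‖w‖ ^ 2) / (2 * w0)) :
    ⟪x - (1 / 2 : ℝ) • w, (x - (1 / 2 : ℝ) • w) - ⟪w0⁻¹ • w, x - (1 / 2 : ℝ) • w⟫ • (w0⁻¹ • w)⟫
      = ‖x‖ ^ 2 - x0 ^ 2 + w0 * ((w0 ^ 2 - ‖w‖ ^ 2) / (2 * w0)) / 2 := by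
  have hwx : ⟪x, w⟫ = w0 * x0 - (w0 ^ 2 - ‖w‖ ^ 2) / 2 := by
    rw [hx0, real_inner_smul_right]
    field_simp
    ring
  rw [inner_sub_inner_smul_self, inner_sub_half_smul_eq_of_mem_hyperplane hw0 hx0,
    norm_sub_sq_real, norm_smul, real_inner_smul_right, hwx,
    Real.norm_of_nonneg (by norm_num)]
  field_simp
  ring

end

/-- Ellipsoid representation of `E(w)` for `w` in the interior of the Lorentz cone:
with `w̄ = w̃/w₀`, `w̄₀ = (w₀² − ‖w̃‖²)/(2w₀)`, `Q = I − w̄w̄ᵀ`, `γ² = w₀w̄₀/2`,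
`E(w) = {x : ‖x̃‖² = x₀², ‖w̃ − x̃‖² = (w₀ − x₀)²}`
equals `{x : x₀ = ⟨x̃, w̄⟩ + w̄₀ ∧ ‖Q^{1/2}(x̃ − w̃/2)‖² = γ²}`
(where `‖Q^{1/2}v‖² = ⟨v, Qv⟩` with `Qv = v − ⟨w̄, v⟩w̄`). -/
theorem ellipsoid_representation (n : ℕ) (w0 : ℝ) (wt : EuclideanSpace ℝ (Fin n))
    (hw : ‖wt‖ < w0) :
    {x : ℝ × EuclideanSpace ℝ (Fin n) |
        ‖x.2‖ ^ 2 = x.1 ^ 2 ∧ ‖wt - x.2‖ ^ 2 = (w0 - x.1) ^ 2}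
      = {x : ℝ × EuclideanSpace ℝ (Fin n) |
          x.1 = (inner ℝ x.2 (w0⁻¹ • wt) : ℝ) + (w0 ^ 2 - ‖wt‖ ^ 2) / (2 * w0) ∧
          (inner ℝ (x.2 - (1 / 2 : ℝ) • wt)
              ((x.2 - (1 / 2 : ℝ) • wt)
                - (inner ℝ (w0⁻¹ • wt) (x.2 - (1 / 2 : ℝ) • wt) : ℝ) • (w0⁻¹ • wt)) : ℝ)
            = w0 * ((w0 ^ 2 - ‖wt‖ ^ 2) / (2 * w0)) / 2} := by
  have hw0 : w0 ≠ 0 := ((norm_nonneg wt).trans_lt hw).ne'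
  ext ⟨x0, x⟩
  simp only [Set.mem_ofPred_eq]
  rw [and_congr_right (norm_sub_sq_eq_sq_iff_of_norm_sq_eq hw0), and_comm]
  refine and_congr_right fun hx0 => ?_
  rw [quadratic_form_eq_of_mem_hyperplane hw0 hx0]
  constructor <;> intro h <;> linarith
end
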